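/- Let a, b > 0 and define ψ(u) = a·(1 − exp(−(1/b)·(u₊)²)), where u₊ = max(u,0). Then for any A ≥ a/b, the function A·u² − ψ(u) is convex on ℝ. -/

import Mathlib

/-!
The derivative of `A u² - a (1 - exp (-(1/b) u₊²))` is `2 (A - a/b) u + 2 (a/b) (u - u₊ exp (-u₊²/b))`,
so it suffices that `t ↦ t - t exp (-t²/b)` is monotone on `[0, ∞)`: its derivative
`1 - exp (-t²/b) + (2t²/b) exp (-t²/b)` is nonnegative because `exp (-t²/b) ≤ 1`.
-/

open Real Set

lemma hasDerivAt_max_zero_sq (x : ℝ) : HasDerivAt (fun u : ℝ => max u 0 ^ 2) (2 * max x 0) x := by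
  rcases lt_trichotomy x 0 with hx | rfl | hx
  · refine (hasDerivAt_const x 0).congr_of_eventuallyEq ?_ |>.congr_deriv (by simp [hx.le])
    filter_upwards [eventually_lt_nhds hx] with u hu
    simp [hu.le]
  · have hneg : HasDerivWithinAt (fun u : ℝ => max u 0 ^ 2) 0 (Iic 0) 0 :=
      (hasDerivWithinAt_const 0 _ 0).congr_of_mem (fun u hu => by simp [mem_Iic.1 hu]) self_mem_Iic
    have hpos : HasDerivWithinAt (fun u : ℝ => max u 0 ^ 2) 0 (Ici 0) 0 :=
      ((hasDerivAt_pow 2 (0 : ℝ)).hasDerivWithinAt.congr_of_mem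
        (fun u hu => by simp [mem_Ici.1 hu]) self_mem_Ici).congr_deriv (by simp)
    simpa [Iic_union_Ici, hasDerivWithinAt_univ] using hneg.union hpos
  · refine (hasDerivAt_pow 2 x).congr_of_eventuallyEq ?_ |>.congr_deriv (by simp [hx.le])
    filter_upwards [eventually_gt_nhds hx] with u hu
    simp [hu.le]

lemma hasDerivAt_sq_sub_one_sub_exp_neg_max_zero_sq (A a c x : ℝ) :
    HasDerivAt (fun u : ℝ => A * u ^ 2 - a * (1 - exp (-c * max u 0 ^ 2)))
      (2 * A * x - 2 * a * c * (max x 0 * exp (-c * max x 0 ^ 2))) x := by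
  have hexp := ((hasDerivAt_max_zero_sq x).const_mul (-c)).exp
  refine (((hasDerivAt_pow 2 x).const_mul A).sub
    (((hasDerivAt_const x 1).sub hexp).const_mul a)).congr_deriv ?_
  push_cast
  ring

lemma monotoneOn_sub_mul_exp_neg_mul_sq {c : ℝ} (hc : 0 ≤ c) :
    MonotoneOn (fun t : ℝ => t - t * exp (-c * t ^ 2)) (Ici 0) := by
  have hderiv (t : ℝ) : HasDerivAt (fun t : ℝ => t - t * exp (-c * t ^ 2))
      (1 - exp (-c * t ^ 2) + 2 * c * t ^ 2 * exp (-c * t ^ 2)) t := by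
    have hexp := ((hasDerivAt_pow 2 t).const_mul (-c)).exp
    refine ((hasDerivAt_id t).sub ((hasDerivAt_id t).mul hexp)).congr_deriv ?_
    simp only [id, Nat.cast_ofNat]
    ring
  refine monotoneOn_of_hasDerivWithinAt_nonneg (convex_Ici 0)
    (fun t _ => (hderiv t).continuousAt.continuousWithinAt)
    (fun t _ => (hderiv t).hasDerivWithinAt) fun t _ => ?_
  have hle : exp (-c * t ^ 2) ≤ 1 := exp_le_one_iff.2 (by nlinarith [sq_nonneg t])
  have : 0 ≤ 2 * c * t ^ 2 * exp (-c * t ^ 2) := by positivity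
  linarith

lemma monotone_sub_max_zero_mul_exp_neg_mul_sq {c : ℝ} (hc : 0 ≤ c) :
    Monotone fun u : ℝ => u - max u 0 * exp (-c * max u 0 ^ 2) := by
  have hsplit : (fun u : ℝ => u - max u 0 * exp (-c * max u 0 ^ 2)) =
      fun u => min u 0 + (max u 0 - max u 0 * exp (-c * max u 0 ^ 2)) := by
    funext u
    linarith [min_add_max u 0]
  rw [hsplit]
  refine (monotone_id.min monotone_const).add fun x y hxy => ?_
  exact monotoneOn_sub_mul_exp_neg_mul_sq hc (le_max_right x 0) (le_max_right y 0)
    (max_le_max_right 0 hxy)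

theorem stmt_11 (a b A : ℝ) (ha : 0 < a) (hb : 0 < b) (hA : a / b ≤ A) :
    ConvexOn ℝ Set.univ
      (fun u : ℝ => A * u ^ 2 - a * (1 - Real.exp (-(1 / b) * (max u 0) ^ 2))) := by
  have hderiv := hasDerivAt_sq_sub_one_sub_exp_neg_max_zero_sq A a (1 / b)
  have hmono := monotone_sub_max_zero_mul_exp_neg_mul_sq (c := 1 / b) (by positivity)
  refine Monotone.convexOn_univ_of_deriv (fun x => (hderiv x).differentiableAt) ?_
  rw [funext fun x => (hderiv x).deriv]
  intro x y hxy
  have hcoef : 0 ≤ A - a * (1 / b) := by rw [mul_one_div]; linarith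
  have hac : 0 ≤ a * (1 / b) := by positivity
  nlinarith [mul_nonneg hcoef (sub_nonneg.2 hxy), mul_nonneg hac (sub_nonneg.2 (hmono hxy))]
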